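/- For n, j ≥ 0, the degenerate r-Whitney numbers of the second kind satisfy W^{(r)}_{m,λ}(n,j) = Σ_{k=j}^n Σ_{l=j}^k C(n,k) C(k,l) (r-1)_{n-k,λ} (1)_{k-l,λ} m^{l-j} S_{2,λ/m}(l,j). -/

import Mathlib

open Finset

/-- Degenerate falling factorial `(x)_{n,λ} = x(x-λ)⋯(x-(n-1)λ)`. -/
noncomputable def dfall (lam x : ℝ) (n : ℕ) : ℝ := ∏ i ∈ Finset.range n, (x - i * lam)

/-- Ordinary falling factorial `(x)_n = x(x-1)⋯(x-n+1)`. -/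
noncomputable def ffall (x : ℝ) (n : ℕ) : ℝ := ∏ i ∈ Finset.range n, (x - i)

/-!
Split `m x + r = m x + 1 + (r - 1)` and expand `(m x + r)_{n,λ}` twice by the binomial theorem
for degenerate falling factorials. The factor `(m x)_{l,λ} = m^l (x)_{l,λ/m}` is then expanded
in the falling factorials `(x)_j` through `S_{2,λ/m}(l, j)`. Comparing the coefficient of
`m^j (x)_j` with the defining expansion of `W` gives the formula, because the falling factorials
`(x)_0, …, (x)_N` are linearly independent as functions: evaluating at `x = k` kills `(x)_i`
for `i > k` but not `(x)_k`.
-/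

lemma dfall_succ (lam x : ℝ) (n : ℕ) :
    dfall lam x (n + 1) = dfall lam x n * (x - n * lam) :=
  prod_range_succ _ _

lemma dfall_add (lam a b : ℝ) (n : ℕ) :
    dfall lam (a + b) n =
      ∑ k ∈ range (n + 1), (n.choose k : ℝ) * dfall lam a k * dfall lam b (n - k) := by
  induction n with
  | zero => simp [dfall]
  | succ n ih =>
    have hsplit := sum_choose_succ_mul (fun i j => dfall lam a i * dfall lam b j) n
    simp only [← mul_assoc] at hsplit
    rw [hsplit, dfall_succ, ih, sum_mul, ← sum_add_distrib]
    refine sum_congr rfl fun i hi => ?_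
    have hin : i ≤ n := Nat.lt_succ_iff.mp (mem_range.mp hi)
    rw [show n + 1 - i = n - i + 1 by omega, dfall_succ, dfall_succ, Nat.cast_sub hin]
    ring

lemma dfall_mul_left {c : ℝ} (hc : c ≠ 0) (lam x : ℝ) (n : ℕ) :
    dfall lam (c * x) n = c ^ n * dfall (lam / c) x n := by
  have hfactor : ∀ i ∈ range n, c * x - i * lam = c * (x - i * (lam / c)) := fun i _ => by
    field_simp
  rw [dfall, dfall, prod_congr rfl hfactor, prod_mul_distrib, prod_const, card_range]

lemma ffall_natCast_eq_zero {j k : ℕ} (h : j < k) : ffall j k = 0 :=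
  prod_eq_zero (mem_range.2 h) (sub_self _)

lemma ffall_natCast_self_ne_zero (k : ℕ) : ffall k k ≠ 0 :=
  prod_ne_zero_iff.2 fun i hi => sub_ne_zero.2 (by exact_mod_cast (mem_range.1 hi).ne')

lemma eq_of_forall_sum_mul_ffall_eq {N : ℕ} {a b : ℕ → ℝ}
    (h : ∀ x, ∑ k ∈ range (N + 1), a k * ffall x k = ∑ k ∈ range (N + 1), b k * ffall x k) :
    ∀ k ≤ N, a k = b k := by
  intro k
  induction k using Nat.strong_induction_on with
  | _ k ih =>
    intro hk
    have hzero : ∑ i ∈ range (N + 1), (a i - b i) * ffall k i = 0 := by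
      simp only [sub_mul, sum_sub_distrib, h, sub_self]
    rw [sum_eq_single k] at hzero
    · exact sub_eq_zero.1 ((mul_eq_zero.1 hzero).resolve_right (ffall_natCast_self_ne_zero k))
    · intro i hi hik
      rcases lt_or_gt_of_ne hik with hlt | hgt
      · rw [ih i hlt (hlt.le.trans hk), sub_self, zero_mul]
      · rw [ffall_natCast_eq_zero hgt, mul_zero]
    · exact fun hk' => absurd (mem_range.2 (Nat.lt_succ_of_le hk)) hk'

lemma sum_range_sum_range_succ_comm {M : Type*} [AddCommMonoid M] (n : ℕ) (f : ℕ → ℕ → M) :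
    ∑ k ∈ range (n + 1), ∑ l ∈ range (k + 1), f k l =
      ∑ l ∈ range (n + 1), ∑ k ∈ Icc l n, f k l :=
  sum_comm' fun k l => by simp only [mem_range, mem_Icc]; omega

lemma dfall_mul_add_eq_sum_ffall {m : ℝ} (hm : m ≠ 0) (lam r : ℝ) (S : ℕ → ℕ → ℝ)
    (hS : ∀ (x : ℝ) (N : ℕ), dfall (lam / m) x N = ∑ k ∈ range (N + 1), S N k * ffall x k)
    (n : ℕ) (x : ℝ) :
    dfall lam (m * x + r) n = ∑ j ∈ range (n + 1),
      (∑ k ∈ Icc j n, ∑ l ∈ Icc j k, (n.choose k : ℝ) * (k.choose l : ℝ) *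
        dfall lam (r - 1) (n - k) * dfall lam 1 (k - l) * m ^ (l - j) * S l j) *
        m ^ j * ffall x j := by
  have hexpand : dfall lam (m * x + r) n =
      ∑ k ∈ range (n + 1), ∑ l ∈ range (k + 1), ∑ j ∈ range (l + 1),
        (n.choose k : ℝ) * (k.choose l : ℝ) * dfall lam (r - 1) (n - k) *
          dfall lam 1 (k - l) * m ^ l * S l j * ffall x j := by
    rw [show m * x + r = m * x + 1 + (r - 1) by ring, dfall_add]
    simp only [dfall_add, dfall_mul_left hm, hS, mul_sum, sum_mul]
    exact sum_congr rfl fun k _ => sum_congr rfl fun l _ => sum_congr rfl fun j _ => by ring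
  rw [hexpand, sum_congr rfl fun k _ => sum_range_sum_range_succ_comm k _,
    sum_range_sum_range_succ_comm n]
  refine sum_congr rfl fun j _ => ?_
  simp only [sum_mul]
  refine sum_congr rfl fun k _ => sum_congr rfl fun l hl => ?_
  rw [← pow_sub_mul_pow m (mem_Icc.1 hl).1]
  ring

theorem stmt9_general (m : ℕ) (hm : 0 < m) (r : ℕ) (lam : ℝ)
    (W : ℕ → ℕ → ℝ)
    (hW : ∀ (x : ℝ) (N : ℕ),
      dfall lam ((m : ℝ) * x + r) N = ∑ k ∈ Finset.range (N + 1), W N k * (m : ℝ) ^ k * ffall x k)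
    (S : ℕ → ℕ → ℝ)
    (hS : ∀ (x : ℝ) (N : ℕ),
      dfall (lam / m) x N = ∑ k ∈ Finset.range (N + 1), S N k * ffall x k)
    (n j : ℕ) (hj : j ≤ n) :
    W n j = ∑ k ∈ Finset.Icc j n, ∑ l ∈ Finset.Icc j k,
      (n.choose k : ℝ) * (k.choose l : ℝ) * dfall lam ((r : ℝ) - 1) (n - k) *
        dfall lam 1 (k - l) * (m : ℝ) ^ (l - j) * S l j := by
  have hm' : (m : ℝ) ≠ 0 := Nat.cast_ne_zero.2 hm.ne'
  have hcoeff := eq_of_forall_sum_mul_ffall_eq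
    (fun x => (hW x n).symm.trans (dfall_mul_add_eq_sum_ffall hm' lam r S hS n x)) j hj
  exact mul_right_cancel₀ (pow_ne_zero j hm') hcoeff

theorem stmt9 (m : ℕ) (hm : 0 < m) (r : ℕ) (lam : ℝ) (hlam : lam ≠ 0)
    (W : ℕ → ℕ → ℝ)
    (hW : ∀ (x : ℝ) (N : ℕ),
      dfall lam ((m : ℝ) * x + r) N = ∑ k ∈ Finset.range (N + 1), W N k * (m : ℝ) ^ k * ffall x k)
    (S : ℕ → ℕ → ℝ)
    (hS : ∀ (x : ℝ) (N : ℕ),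
      dfall (lam / m) x N = ∑ k ∈ Finset.range (N + 1), S N k * ffall x k)
    (n j : ℕ) (hj : j ≤ n) :
    W n j = ∑ k ∈ Finset.Icc j n, ∑ l ∈ Finset.Icc j k,
      (n.choose k : ℝ) * (k.choose l : ℝ) * dfall lam ((r : ℝ) - 1) (n - k) *
        dfall lam 1 (k - l) * (m : ℝ) ^ (l - j) * S l j :=
  stmt9_general m hm r lam W hW S hS n j hj
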